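/- Let $\Sigma\in\mathsf{c}\text{-}\mathsf{Fan}_{sc}(2)$ be a complete sign-coherent fan of rank 2. Then $\Sigma$ contains $\mathrm{cone}\{(-1,0),(0,1)\}$ if and only if its quiddity sequence (with the convention that it is written $(a_1,\dots,a_i; a_n,\dots,a_{i+1})$ splitting at the rays $(0,-1)$ and $(-1,0)$) has the form $(b_1,\dots,b_m;0,0)$. In that case $b_j\ge 0$ for all $1\le j\le m$. -/

import Mathlib

/-!
The rays from `(1,0)` to `(0,-1)` stay in the closed fourth quadrant: a consecutive pair lies in
a common closed quadrant, and unimodularity forces a ray on an axis to be `(1,0)` or `(0,-1)`,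
after which the next ray cannot leave the quadrant. Strictly before `(0,-1)` these rays have
positive first coordinate, so the first coordinate of `a j • v j = v (j-1) + v (j+1)` gives
`a j ≥ 0`; at `(0,-1)` itself the second coordinate does. The equivalence comes from the
injectivity of the rays, and from `a • v = 0` at the two rays `(-1,0)` and `(0,1)` whose
neighbours are then opposite.
-/

namespace RankTwoFan

def det (u w : ℤ × ℤ) : ℤ := u.1 * w.2 - u.2 * w.1

def SignCoherent (u w : ℤ × ℤ) : Prop :=
  ((0 ≤ u.1 ∧ 0 ≤ w.1) ∨ (u.1 ≤ 0 ∧ w.1 ≤ 0)) ∧ ((0 ≤ u.2 ∧ 0 ≤ w.2) ∨ (u.2 ≤ 0 ∧ w.2 ≤ 0))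

def fourthQuadrant : Set (ℤ × ℤ) := {u | 0 ≤ u.1 ∧ u.2 ≤ 0}

lemma fst_pos_of_det_eq_neg_one {u w : ℤ × ℤ} (hu : u ∈ fourthQuadrant) (hne : u ≠ (0, -1))
    (hdet : det u w = -1) : 0 < u.1 := by
  refine hu.1.lt_of_ne fun hx => hne ?_
  have hmul : u.2 * w.1 = 1 := by simp only [det, ← hx] at hdet; linarith
  rcases Int.eq_one_or_neg_one_of_mul_eq_one hmul with hy | hy
  · linarith [hu.2]
  · exact Prod.ext hx.symm hy

lemma mem_fourthQuadrant_of_det_eq_neg_one {u w : ℤ × ℤ} (hu : u ∈ fourthQuadrant)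
    (hne : u ≠ (0, -1)) (hdet : det u w = -1) (hsc : SignCoherent u w) : w ∈ fourthQuadrant := by
  have hx := fst_pos_of_det_eq_neg_one hu hne hdet
  obtain ⟨hscx, hscy⟩ := hsc
  refine ⟨hscx.elim (·.2) fun h => absurd h.1 hx.not_ge, ?_⟩
  rcases hu.2.lt_or_eq with hy | hy
  · exact hscy.elim (fun h => absurd h.1 hy.not_ge) (·.2)
  · simp only [det, hy, zero_mul, sub_zero] at hdet
    nlinarith

variable {n i₀ : ℕ} {v : ℕ → ℤ × ℤ}

lemma mem_fourthQuadrant_of_le (hv1 : v 1 = (1, 0)) (hi₀n : i₀ ≤ n)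
    (hne : ∀ j, 1 ≤ j → j < i₀ → v j ≠ (0, -1))
    (hbasis : ∀ i < n, det (v i) (v (i + 1)) = -1)
    (hsc : ∀ i < n, SignCoherent (v i) (v (i + 1))) :
    ∀ j, 1 ≤ j → j ≤ i₀ → v j ∈ fourthQuadrant := by
  intro j hj1 hji₀
  induction j, hj1 using Nat.le_induction with
  | base => simp [fourthQuadrant, hv1]
  | succ k hk ih =>
    exact mem_fourthQuadrant_of_det_eq_neg_one (ih (by omega)) (hne k hk (by omega))
      (hbasis k (by omega)) (hsc k (by omega))

lemma quiddity_nonneg_of_le {a : ℕ → ℤ} (hv0 : v 0 = (0, 1)) (hv1 : v 1 = (1, 0))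
    (hvi₀ : v i₀ = (0, -1))
    (hvi₀' : v (i₀ + 1) = (-1, 0)) (hi₀n : i₀ < n)
    (hQ : ∀ j, 1 ≤ j → j ≤ i₀ → v j ∈ fourthQuadrant)
    (hne : ∀ j, 1 ≤ j → j < i₀ → v j ≠ (0, -1))
    (hbasis : ∀ i < n, det (v i) (v (i + 1)) = -1)
    (hrec : ∀ j, 1 ≤ j → j ≤ i₀ → a j • v j = v (j - 1) + v (j + 1))
    {j : ℕ} (hj1 : 1 ≤ j) (hji₀ : j ≤ i₀) : 0 ≤ a j := by
  have hrec_fst := congrArg Prod.fst (hrec j hj1 hji₀)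
  have hrec_snd := congrArg Prod.snd (hrec j hj1 hji₀)
  simp only [Prod.smul_fst, Prod.smul_snd, Prod.fst_add, Prod.snd_add, smul_eq_mul]
    at hrec_fst hrec_snd
  rcases hji₀.lt_or_eq with hj | rfl
  · have hx := fst_pos_of_det_eq_neg_one (hQ j hj1 hj.le) (hne j hj1 hj) (hbasis j (by omega))
    have hprev : 0 ≤ (v (j - 1)).1 := by
      rcases hj1.eq_or_lt with rfl | hj1
      · simp [hv0]
      · exact (hQ (j - 1) (by omega) (by omega)).1
    have hnext : 0 ≤ (v (j + 1)).1 := (hQ (j + 1) (by omega) hj).1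
    nlinarith
  · have hprev : (v (j - 1)).2 ≤ 0 := by
      rcases hj1.eq_or_lt with rfl | hj1
      · simp [hv1] at hvi₀
      · exact (hQ (j - 1) (by omega) (by omega)).2
    simp only [hvi₀, hvi₀'] at hrec_snd
    linarith

end RankTwoFan

open RankTwoFan in
/-- The cone `{(-1,0),(0,1)}` belongs to `Σ` exactly when `v (n-1) = (-1,0)`; the split
quiddity sequence is `(a 1, …, a i₀; a n, …, a (i₀+1))`. -/
theorem stmt_16_general (n i₀ : ℕ) (v : ℕ → ℤ × ℤ) (a : ℕ → ℤ)
    (hv0 : v 0 = (0, 1)) (hv1 : v 1 = (1, 0)) (hvn : v n = (0, 1))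
    (hi₀ : 2 ≤ i₀ ∧ i₀ ≤ n - 2) (hvi₀ : v i₀ = (0, -1)) (hvi₀' : v (i₀ + 1) = (-1, 0))
    (hinj : ∀ i j, 1 ≤ i → i < j → j ≤ n → v i ≠ v j)
    (hbasis : ∀ i < n, (v i).1 * (v (i + 1)).2 - (v i).2 * (v (i + 1)).1 = -1)
    -- sign-coherence: consecutive rays lie in a common closed quadrant
    (hsc : ∀ i < n,
      ((0 ≤ (v i).1 ∧ 0 ≤ (v (i + 1)).1) ∨ ((v i).1 ≤ 0 ∧ (v (i + 1)).1 ≤ 0)) ∧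
      ((0 ≤ (v i).2 ∧ 0 ≤ (v (i + 1)).2) ∨ ((v i).2 ≤ 0 ∧ (v (i + 1)).2 ≤ 0)))
    (hrec : ∀ i, 1 ≤ i → i ≤ n - 1 → a i • v i = v (i - 1) + v (i + 1))
    (hrecn : a n • v n = v (n - 1) + v 1) :
    (v (n - 1) = (-1, 0) ↔ (i₀ = n - 2 ∧ a (n - 1) = 0 ∧ a n = 0)) ∧
    (v (n - 1) = (-1, 0) → ∀ j, 1 ≤ j → j ≤ i₀ → 0 ≤ a j) := by
  obtain ⟨hi₀2, hi₀n⟩ := hi₀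
  have hne : ∀ j, 1 ≤ j → j < i₀ → v j ≠ (0, -1) := fun j hj1 hj =>
    hvi₀ ▸ hinj j i₀ hj1 hj (by omega)
  have hQ := mem_fourthQuadrant_of_le hv1 (by omega) hne hbasis hsc
  refine ⟨⟨fun h => ?_, fun ⟨h, _⟩ => by rwa [show n - 1 = i₀ + 1 by omega]⟩,
    fun _ j hj1 hji₀ => quiddity_nonneg_of_le hv0 hv1 hvi₀ hvi₀' (by omega) hQ hne hbasis
      (fun j hj1 hji₀ => hrec j hj1 (by omega)) hj1 hji₀⟩
  have hi₀_eq : i₀ = n - 2 := by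
    by_contra hi₀_ne
    exact hinj (i₀ + 1) (n - 1) (by omega) (by omega) (by omega) (hvi₀'.trans h.symm)
  have hrec' := hrec (n - 1) (by omega) le_rfl
  rw [show n - 1 - 1 = i₀ by omega, show n - 1 + 1 = n by omega, hvi₀, hvn, h] at hrec'
  rw [hvn, h, hv1] at hrecn
  exact ⟨hi₀_eq, by simpa using hrec', by simpa using hrecn⟩

/-- Let `Σ` be a complete sign-coherent fan of rank 2, with rays
`v 1 = (1,0), …, v i₀ = (0,-1), v (i₀+1) = (-1,0), …, v n = v 0 = (0,1)` in clockwise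
order (pairwise distinct, consecutive pairs `ℤ`-bases, each consecutive pair lying in a
common closed quadrant) and quiddity sequence `a`.  Then `Σ` contains
`cone{(-1,0),(0,1)}` (i.e. `v (n-1) = (-1,0)`) if and only if its split quiddity
sequence has the form `(b 1, …, b m; 0, 0)` (i.e. `i₀ = n-2` and
`a (n-1) = a n = 0`), and in that case all `b j = a j ≥ 0` for `1 ≤ j ≤ i₀`. -/
theorem stmt_16 (n i₀ : ℕ) (hn : 4 ≤ n) (v : ℕ → ℤ × ℤ) (a : ℕ → ℤ)
    (hv0 : v 0 = (0, 1)) (hv1 : v 1 = (1, 0)) (hvn : v n = (0, 1))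
    (hi₀ : 2 ≤ i₀ ∧ i₀ ≤ n - 2) (hvi₀ : v i₀ = (0, -1)) (hvi₀' : v (i₀ + 1) = (-1, 0))
    (hinj : ∀ i j, 1 ≤ i → i < j → j ≤ n → v i ≠ v j)
    (hbasis : ∀ i < n, (v i).1 * (v (i + 1)).2 - (v i).2 * (v (i + 1)).1 = -1)
    -- sign-coherence: consecutive rays lie in a common closed quadrant
    (hsc : ∀ i < n,
      ((0 ≤ (v i).1 ∧ 0 ≤ (v (i + 1)).1) ∨ ((v i).1 ≤ 0 ∧ (v (i + 1)).1 ≤ 0)) ∧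
      ((0 ≤ (v i).2 ∧ 0 ≤ (v (i + 1)).2) ∨ ((v i).2 ≤ 0 ∧ (v (i + 1)).2 ≤ 0)))
    (hrec : ∀ i, 1 ≤ i → i ≤ n - 1 → a i • v i = v (i - 1) + v (i + 1))
    (hrecn : a n • v n = v (n - 1) + v 1) :
    (v (n - 1) = (-1, 0) ↔ (i₀ = n - 2 ∧ a (n - 1) = 0 ∧ a n = 0)) ∧
    (v (n - 1) = (-1, 0) → ∀ j, 1 ≤ j → j ≤ i₀ → 0 ≤ a j) :=
  stmt_16_general n i₀ v a hv0 hv1 hvn hi₀ hvi₀ hvi₀' hinj hbasis hsc hrec hrecn
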